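/- arXiv:1704.01319 — 3 statements merged into one kernel-verified Lean document; each statement's English description precedes it below -/
import Mathlib

section
/- For every homogeneous element a of R and every α in Λ, one has ψ_α(d(a)) - d(ψ_α(a)) - Σ_{β in Λ} (-1)^{|ψ_β(a)|} ψ_β(a) ψ_α(d(x_β)) = 0 in R, where |ψ_β(a)| = |a| - |x_β| and the sum has only finitely many nonzero terms. -/
noncomputable section

open scoped DirectSum

/-- The sign `(-1)^m`, as an integer, for `m : ℤ`. -/
def sgn (m : ℤ) : ℤ := (Int.negOnePow m : ℤ)

/-- A differential graded Poisson algebra structure on a `ℤ`-graded `k`-algebra `A`,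
whose grading is given by `𝒜`. -/
structure DGPoissonAlgebra (k : Type) [Field k] (A : Type) [Ring A] [Algebra k A]
    (𝒜 : ℤ → Submodule k A) : Type where
  /-- the Poisson bracket -/
  br : A →ₗ[k] A →ₗ[k] A
  /-- the differential -/
  d : A →ₗ[k] A
  br_mem : ∀ ⦃i j : ℤ⦄ ⦃a b : A⦄, a ∈ 𝒜 i → b ∈ 𝒜 j → br a b ∈ 𝒜 (i + j)
  d_mem : ∀ ⦃i : ℤ⦄ ⦃a : A⦄, a ∈ 𝒜 i → d a ∈ 𝒜 (i + 1)
  antisymm : ∀ ⦃i j : ℤ⦄ ⦃a b : A⦄, a ∈ 𝒜 i → b ∈ 𝒜 j →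
    br a b = -(sgn (i * j) • br b a)
  jacobi : ∀ ⦃i j l : ℤ⦄ ⦃a b c : A⦄, a ∈ 𝒜 i → b ∈ 𝒜 j → c ∈ 𝒜 l →
    br a (br b c) = br (br a b) c + sgn (i * j) • br b (br a c)
  gcomm : ∀ ⦃i j : ℤ⦄ ⦃a b : A⦄, a ∈ 𝒜 i → b ∈ 𝒜 j → a * b = sgn (i * j) • (b * a)
  leibniz : ∀ ⦃i j l : ℤ⦄ ⦃a b c : A⦄, a ∈ 𝒜 i → b ∈ 𝒜 j → c ∈ 𝒜 l →
    br a (b * c) = br a b * c + sgn (i * j) • (b * br a c)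
  d_sq : ∀ a : A, d (d a) = 0
  d_br : ∀ ⦃i j : ℤ⦄ ⦃a b : A⦄, a ∈ 𝒜 i → b ∈ 𝒜 j →
    d (br a b) = br (d a) b + sgn i • br a (d b)
  d_mul : ∀ ⦃i j : ℤ⦄ ⦃a b : A⦄, a ∈ 𝒜 i → b ∈ 𝒜 j →
    d (a * b) = d a * b + sgn i • (a * d b)

/-- A differential graded algebra structure (i.e. a differential) on a `ℤ`-graded
`k`-algebra `B` with grading `ℬ`. -/
structure DGAlgebra (k : Type) [Field k] (B : Type) [Ring B] [Algebra k B]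
    (ℬ : ℤ → Submodule k B) : Type where
  /-- the differential -/
  d : B →ₗ[k] B
  d_mem : ∀ ⦃i : ℤ⦄ ⦃b : B⦄, b ∈ ℬ i → d b ∈ ℬ (i + 1)
  d_sq : ∀ b : B, d (d b) = 0
  d_mul : ∀ ⦃i j : ℤ⦄ ⦃a b : B⦄, a ∈ ℬ i → b ∈ ℬ j →
    d (a * b) = d a * b + sgn i • (a * d b)

/-- `f` is a DG algebra map: a degree-`0` algebra map commuting with the differentials. -/
structure IsDGAlgebraMap (k : Type) [Field k] {A B : Type} [Ring A] [Algebra k A]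
    [Ring B] [Algebra k B] (𝒜 : ℤ → Submodule k A) (ℬ : ℤ → Submodule k B)
    (dA : A →ₗ[k] A) (dB : B →ₗ[k] B) (f : A →ₐ[k] B) : Prop where
  map_mem : ∀ ⦃i : ℤ⦄ ⦃a : A⦄, a ∈ 𝒜 i → f a ∈ ℬ i
  map_d : ∀ a : A, f (dA a) = dB (f a)

/-- The compatibility conditions satisfied by a pair `(f, g)` from a DG Poisson algebra
`A` to a DG algebra `B`: `f` is a DG algebra map, `g` is a degree-`0` `k`-linear map
commuting with the differentials which is a graded Lie algebra map into `B` with the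
graded commutator, and the two mixed identities hold. -/
def UEACompat (k : Type) [Field k] {A B : Type} [Ring A] [Algebra k A]
    [Ring B] [Algebra k B] (𝒜 : ℤ → Submodule k A) (ℬ : ℤ → Submodule k B)
    (P : DGPoissonAlgebra k A 𝒜) (dB : B →ₗ[k] B)
    (f : A →ₐ[k] B) (g : A →ₗ[k] B) : Prop :=
  IsDGAlgebraMap k 𝒜 ℬ P.d dB f ∧
  (∀ ⦃i : ℤ⦄ ⦃a : A⦄, a ∈ 𝒜 i → g a ∈ ℬ i) ∧
  (∀ a : A, g (P.d a) = dB (g a)) ∧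
  (∀ ⦃i j : ℤ⦄ ⦃a b : A⦄, a ∈ 𝒜 i → b ∈ 𝒜 j →
    g (P.br a b) = g a * g b - sgn (i * j) • (g b * g a)) ∧
  (∀ ⦃i j : ℤ⦄ ⦃a b : A⦄, a ∈ 𝒜 i → b ∈ 𝒜 j →
    f (P.br a b) = g a * f b - sgn (i * j) • (f b * g a)) ∧
  (∀ ⦃i j : ℤ⦄ ⦃a b : A⦄, a ∈ 𝒜 i → b ∈ 𝒜 j →
    g (a * b) = f a * g b + sgn (i * j) • (f b * g a))

/-- `(E, α, β)` is a universal enveloping algebra of the DG Poisson algebra `A`. -/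
def IsUEA (k : Type) [Field k] {A E : Type} [Ring A] [Algebra k A] [Ring E] [Algebra k E]
    (𝒜 : ℤ → Submodule k A) (ℰ : ℤ → Submodule k E)
    (P : DGPoissonAlgebra k A 𝒜) (DE : DGAlgebra k E ℰ)
    (α : A →ₐ[k] E) (β : A →ₗ[k] E) : Prop :=
  UEACompat k 𝒜 ℰ P DE.d α β ∧
  ∀ (D : Type) [Ring D] [Algebra k D] (𝒟 : ℤ → Submodule k D) [GradedAlgebra 𝒟]
    (dD : DGAlgebra k D 𝒟) (f : A →ₐ[k] D) (g : A →ₗ[k] D),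
    UEACompat k 𝒜 𝒟 P dD.d f g →
    ∃! φ : E →ₐ[k] D, IsDGAlgebraMap k ℰ 𝒟 DE.d dD.d φ ∧
      φ.comp α = f ∧ φ.toLinearMap.comp β = g

/-- The two-sided ideal of `F` generated by a set `S`, as a `k`-submodule. -/
def idealGen (k : Type) [Field k] {F : Type} [Ring F] [Algebra k F] (S : Set F) :
    Submodule k F :=
  Submodule.span k {z : F | ∃ u v : F, ∃ s ∈ S, z = u * s * v}

/-- The left ideal of `F` generated by a set `S`, as a `k`-submodule. -/
def leftIdealGen (k : Type) [Field k] {F : Type} [Ring F] [Algebra k F] (S : Set F) :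
    Submodule k F :=
  Submodule.span k {z : F | ∃ u : F, ∃ s ∈ S, z = u * s}

/-- A submodule is graded if it is spanned by its homogeneous elements. -/
def IsGradedSubmodule (k : Type) [Field k] {A : Type} [AddCommGroup A] [Module k A]
    (𝒜 : ℤ → Submodule k A) (M : Submodule k A) : Prop :=
  M ≤ Submodule.span k {a : A | a ∈ M ∧ ∃ i, a ∈ 𝒜 i}

/-- A `k`-submodule which is a two-sided ideal. -/
def IsTwoSidedIdealSub (k : Type) [Field k] {A : Type} [Ring A] [Algebra k A]
    (M : Submodule k A) : Prop :=
  ∀ r : A, ∀ m ∈ M, r * m ∈ M ∧ m * r ∈ M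

/-- A DG ideal: a graded two-sided ideal closed under the differential `d`. -/
def IsDGIdeal (k : Type) [Field k] {A : Type} [Ring A] [Algebra k A]
    (𝒜 : ℤ → Submodule k A) (d : A →ₗ[k] A) (M : Submodule k A) : Prop :=
  IsTwoSidedIdealSub k M ∧ IsGradedSubmodule k 𝒜 M ∧ ∀ m ∈ M, d m ∈ M

/-- A DG Poisson ideal: a DG ideal which is also closed under the Poisson bracket. -/
def IsDGPoissonIdeal (k : Type) [Field k] {A : Type} [Ring A] [Algebra k A]
    (𝒜 : ℤ → Submodule k A) (P : DGPoissonAlgebra k A 𝒜) (M : Submodule k A) : Prop :=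
  IsDGIdeal k 𝒜 P.d M ∧ ∀ a : A, ∀ m ∈ M, P.br a m ∈ M

/-- `π : A → B` presents `B` as the quotient of `A` by `I`. -/
structure IsQuotientBy (k : Type) [Field k] {A B : Type} [Ring A] [Algebra k A]
    [Ring B] [Algebra k B] (π : A →ₐ[k] B) (I : Submodule k A) : Prop where
  surj : Function.Surjective π
  ker : ∀ a : A, π a = 0 ↔ a ∈ I

/-- The (noncommutative, ordered) monomial `x 0 ^ e 0 * x 1 ^ e 1 * ⋯` . -/
def xMono {n : ℕ} {R : Type} [Ring R] (x : Fin n → R) (e : Fin n → ℕ) : R :=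
  ((List.finRange n).map fun r => x r ^ e r).prod

/-!
Fix `α` and put `T_i(a) = ψ_α(d a) - d(ψ_α a) - ∑_β (-1)^(i - |x_β|) ψ_β(a) ψ_α(d x_β)`.
The commutator `[ψ_α, d]` and the sum obey the same twisted Leibniz rule
`T_{i+j}(ab) = (-1)^i a T_j(b) + (-1)^((i+1)j) b T_i(a)` for `a` of degree `i` and `b` of
degree `j`, and `T` vanishes on `1` and on each generator `x_γ`, where the sum collapses to its
term `β = γ`, namely `ψ_α(d x_γ)`. Hence `T` vanishes on every monomial in the generators.
These monomials are homogeneous and span `R`, so the degree-`i` component of any element is a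
combination of monomials of degree `i`, and `T_i` vanishes on all of `R_i`.
-/

open Function

lemma sgn_mul_sgn (m n : ℤ) : sgn m * sgn n = sgn (m + n) := by
  simp [sgn, Int.negOnePow_add]

lemma sgn_eq_sgn_of_even_sub {m n : ℤ} (h : Even (m - n)) : sgn m = sgn n := by
  simp [sgn, (Int.negOnePow_eq_iff m n).2 h]

section PointwiseFinsum

variable {ι k M N : Type*} [Semiring k] [AddCommMonoid M] [Module k M]
  [AddCommMonoid N] [Module k N]

lemma finite_support_apply_of_map_zero {f : ι → M} (hf : (support f).Finite)
    (g : ι → M → N) (hg : ∀ i, g i 0 = 0) : (support fun i => g i (f i)).Finite :=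
  hf.subset fun i hi hfi => hi (by simp only [hfi, hg])

def pointwiseFinsum (f : ι → M →ₗ[k] N) (hf : ∀ a, (support fun i => f i a).Finite) :
    M →ₗ[k] N where
  toFun a := ∑ᶠ i, f i a
  map_add' a b := by simp only [map_add]; exact finsum_add_distrib (hf a) (hf b)
  map_smul' c a := by simp only [map_smul, RingHom.id_apply]; exact (smul_finsum' c (hf a)).symm

lemma pointwiseFinsum_apply (f : ι → M →ₗ[k] N) (hf : ∀ a, (support fun i => f i a).Finite)
    (a : M) : pointwiseFinsum f hf a = ∑ᶠ i, f i a :=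
  rfl

end PointwiseFinsum

lemma DirectSum.Decomposition.apply_eq_zero_of_mem {ι k M N : Type*} [DecidableEq ι]
    [Semiring k] [AddCommMonoid M] [Module k M] [AddCommMonoid N] [Module k N]
    (𝒜 : ι → Submodule k M) [DirectSum.Decomposition 𝒜] (f : ι → M →ₗ[k] N) {s : Set M}
    (hs : Submodule.span k s = ⊤) (hf : ∀ b ∈ s, ∃ n, b ∈ 𝒜 n ∧ f n b = 0)
    {i : ι} {a : M} (ha : a ∈ 𝒜 i) : f i a = 0 := by
  have hcomponent : ∀ b, f i (DirectSum.decompose 𝒜 b i) = 0 := by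
    intro b
    have hb : b ∈ Submodule.span k s := hs ▸ Submodule.mem_top
    induction hb using Submodule.span_induction with
    | mem b hb =>
      obtain ⟨n, hbn, hfb⟩ := hf b hb
      by_cases hni : n = i
      · subst hni
        rwa [DirectSum.decompose_of_mem_same 𝒜 hbn]
      · rw [DirectSum.decompose_of_mem_ne 𝒜 hbn hni, map_zero]
    | zero => simp
    | add b b' _ _ hb hb' => simp [DirectSum.decompose_add, hb, hb']
    | smul c b _ hb => simp [DirectSum.decompose_smul, DirectSum.smul_apply, hb]
  simpa [DirectSum.decompose_of_mem_same 𝒜 ha] using hcomponent a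

section AntiLeibniz

variable {k R : Type} [Field k] [Ring R] [Algebra k R] {𝒜 : ℤ → Submodule k R}

def IsAntiLeibniz (𝒜 : ℤ → Submodule k R) (ψ : R →ₗ[k] R) : Prop :=
  ∀ ⦃i j : ℤ⦄ ⦃a b : R⦄, a ∈ 𝒜 i → b ∈ 𝒜 j → ψ (a * b) = a * ψ b + sgn (i * j) • (b * ψ a)

lemma IsAntiLeibniz.map_one [SetLike.GradedOne 𝒜] {ψ : R →ₗ[k] R} (hψ : IsAntiLeibniz 𝒜 ψ) :
    ψ 1 = 0 := by
  have h := hψ (SetLike.one_mem_graded 𝒜) (SetLike.one_mem_graded 𝒜)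
  simpa [sgn] using h

lemma DGPoissonAlgebra.d_one [SetLike.GradedOne 𝒜] (P : DGPoissonAlgebra k R 𝒜) :
    P.d 1 = 0 := by
  have h := P.d_mul (SetLike.one_mem_graded 𝒜) (SetLike.one_mem_graded 𝒜)
  simpa [sgn] using h

lemma DGPoissonAlgebra.antiLeibniz_comm_d_mul (P : DGPoissonAlgebra k R 𝒜) {ψ : R →ₗ[k] R}
    {e : ℤ} (hmem : ∀ ⦃i : ℤ⦄ ⦃a : R⦄, a ∈ 𝒜 i → ψ a ∈ 𝒜 (i - e)) (hψ : IsAntiLeibniz 𝒜 ψ)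
    {i j : ℤ} {a b : R} (ha : a ∈ 𝒜 i) (hb : b ∈ 𝒜 j) :
    ψ (P.d (a * b)) - P.d (ψ (a * b))
      = sgn i • (a * (ψ (P.d b) - P.d (ψ b)))
        + sgn (i * j + j) • (b * (ψ (P.d a) - P.d (ψ a))) := by
  have hsign : sgn i * sgn (i * (j + 1)) = sgn (i * j) :=
    (sgn_mul_sgn _ _).trans (sgn_eq_sgn_of_even_sub ⟨i, by ring⟩)
  rw [P.d_mul ha hb, map_add, map_zsmul, hψ (P.d_mem ha) hb, hψ ha (P.d_mem hb), hψ ha hb,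
    map_add, map_zsmul, P.d_mul ha (hmem hb), P.d_mul hb (hmem ha), smul_add, smul_add,
    smul_smul, smul_smul, hsign, sgn_mul_sgn, show (i + 1) * j = i * j + j by ring]
  simp only [mul_sub, smul_sub]
  abel

section SignedSum

variable {Λ : Type*} (ψ : Λ → R →ₗ[k] R) (w : Λ → ℤ) (c : Λ → R)
  (hψfin : ∀ a, (support fun β => ψ β a).Finite)

def signedSum (i : ℤ) : R →ₗ[k] R :=
  pointwiseFinsum (fun β => sgn (i - w β) • (LinearMap.mulRight k (c β) ∘ₗ ψ β))
    fun a => finite_support_apply_of_map_zero (hψfin a) (fun β y => sgn (i - w β) • (y * c β))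
      fun β => by simp

lemma signedSum_apply (i : ℤ) (a : R) :
    signedSum ψ w c hψfin i a = ∑ᶠ β, sgn (i - w β) • (ψ β a * c β) :=
  rfl

lemma signedSum_mul (hψ : ∀ β, IsAntiLeibniz 𝒜 (ψ β)) {i j : ℤ} {a b : R}
    (ha : a ∈ 𝒜 i) (hb : b ∈ 𝒜 j) :
    signedSum ψ w c hψfin (i + j) (a * b)
      = sgn i • (a * signedSum ψ w c hψfin j b)
        + sgn (i * j + j) • (b * signedSum ψ w c hψfin i a) := by
  have hfin : ∀ (l : ℤ) (y : R), (support fun β => sgn (l - w β) • (ψ β y * c β)).Finite :=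
    fun l y => finite_support_apply_of_map_zero (hψfin y) (fun β z => sgn (l - w β) • (z * c β))
      fun β => by simp
  let left : R →ₗ[k] R := sgn i • LinearMap.mulLeft k a
  let right : R →ₗ[k] R := sgn (i * j + j) • LinearMap.mulLeft k b
  change _ = left (signedSum ψ w c hψfin j b) + right (signedSum ψ w c hψfin i a)
  rw [signedSum_apply, signedSum_apply, signedSum_apply, map_finsum left (hfin j b),
    map_finsum right (hfin i a),
    ← finsum_add_distrib (finite_support_apply_of_map_zero (hfin j b) _ fun _ => map_zero left)
      (finite_support_apply_of_map_zero (hfin i a) _ fun _ => map_zero right)]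
  refine finsum_congr fun β => ?_
  simp only [left, right, LinearMap.smul_apply, LinearMap.mulLeft_apply, hψ β ha hb, add_mul,
    smul_add, smul_mul_assoc, mul_smul_comm, smul_smul, mul_assoc, sgn_mul_sgn]
  ring_nf

end SignedSum

section Defect

variable {Λ : Type*} (P : DGPoissonAlgebra k R 𝒜) (x : Λ → R) (w : Λ → ℤ)
  (ψ : Λ → R →ₗ[k] R) (hψfin : ∀ a, (support fun β => ψ β a).Finite) (α : Λ)

def antiDifferentialDefect (i : ℤ) : R →ₗ[k] R :=
  ψ α ∘ₗ P.d - P.d ∘ₗ ψ α - signedSum ψ w (fun β => ψ α (P.d (x β))) hψfin i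

lemma antiDifferentialDefect_apply (i : ℤ) (a : R) :
    antiDifferentialDefect P x w ψ hψfin α i a
      = ψ α (P.d a) - P.d (ψ α a) - ∑ᶠ β, sgn (i - w β) • (ψ β a * ψ α (P.d (x β))) :=
  rfl

lemma antiDifferentialDefect_mul (hmem : ∀ ⦃i : ℤ⦄ ⦃a : R⦄, a ∈ 𝒜 i → ψ α a ∈ 𝒜 (i - w α))
    (hψ : ∀ β, IsAntiLeibniz 𝒜 (ψ β)) {i j : ℤ} {a b : R} (ha : a ∈ 𝒜 i) (hb : b ∈ 𝒜 j) :
    antiDifferentialDefect P x w ψ hψfin α (i + j) (a * b)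
      = sgn i • (a * antiDifferentialDefect P x w ψ hψfin α j b)
        + sgn (i * j + j) • (b * antiDifferentialDefect P x w ψ hψfin α i a) := by
  simp only [antiDifferentialDefect, LinearMap.sub_apply, LinearMap.comp_apply]
  rw [P.antiLeibniz_comm_d_mul hmem (hψ α) ha hb, signedSum_mul ψ w _ hψfin hψ ha hb]
  simp only [mul_sub, smul_sub]
  abel

lemma antiDifferentialDefect_one [SetLike.GradedOne 𝒜] (hψ : ∀ β, IsAntiLeibniz 𝒜 (ψ β)) :
    antiDifferentialDefect P x w ψ hψfin α 0 1 = 0 := by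
  simp [antiDifferentialDefect_apply, P.d_one, (hψ _).map_one]

lemma antiDifferentialDefect_generator [SetLike.GradedOne 𝒜] (hψx : ∀ β, ψ β (x β) = 1)
    (hψx' : ∀ β γ, β ≠ γ → ψ β (x γ) = 0) (γ : Λ) :
    antiDifferentialDefect P x w ψ hψfin α (w γ) (x γ) = 0 := by
  have hdψ : P.d (ψ α (x γ)) = 0 := by
    by_cases h : α = γ
    · rw [h, hψx, P.d_one]
    · rw [hψx' α γ h, map_zero]
  have hsum : ∑ᶠ β, sgn (w γ - w β) • (ψ β (x γ) * ψ α (P.d (x β))) = ψ α (P.d (x γ)) := by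
    rw [finsum_eq_single _ γ fun β hβ => by rw [hψx' β γ hβ, zero_mul, smul_zero], hψx, sub_self,
      one_mul]
    exact one_smul ℤ _
  rw [antiDifferentialDefect_apply, hdψ, hsum, sub_zero, sub_self]

lemma exists_mem_antiDifferentialDefect_eq_zero [SetLike.GradedMonoid 𝒜]
    (hx : ∀ β, x β ∈ 𝒜 (w β)) (hψx : ∀ β, ψ β (x β) = 1)
    (hψx' : ∀ β γ, β ≠ γ → ψ β (x γ) = 0)
    (hmem : ∀ ⦃i : ℤ⦄ ⦃a : R⦄, a ∈ 𝒜 i → ψ α a ∈ 𝒜 (i - w α))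
    (hψ : ∀ β, IsAntiLeibniz 𝒜 (ψ β)) {m : R} (hm : m ∈ Submonoid.closure (Set.range x)) :
    ∃ n, m ∈ 𝒜 n ∧ antiDifferentialDefect P x w ψ hψfin α n m = 0 := by
  induction hm using Submonoid.closure_induction with
  | mem _ hy =>
    obtain ⟨γ, rfl⟩ := hy
    exact ⟨w γ, hx γ, antiDifferentialDefect_generator P x w ψ hψfin α hψx hψx' γ⟩
  | one => exact ⟨0, SetLike.one_mem_graded 𝒜, antiDifferentialDefect_one P x w ψ hψfin α hψ⟩
  | mul a b _ _ iha ihb =>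
    obtain ⟨i, ha, hTa⟩ := iha
    obtain ⟨j, hb, hTb⟩ := ihb
    refine ⟨i + j, SetLike.mul_mem_graded ha hb, ?_⟩
    rw [antiDifferentialDefect_mul P x w ψ hψfin α hmem hψ ha hb, hTa, hTb]
    simp

end Defect

end AntiLeibniz

/-- For the free graded-commutative DG Poisson algebra `R` on
homogeneous generators `x α` (of degree `w α`), with anti-differentials `ψ α`, one has
`ψ α (d a) - d (ψ α a) - ∑_β (-1)^{|ψ_β a|} ψ_β a * ψ_α (d x_β) = 0` for every
homogeneous `a ∈ R` and every `α`. -/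
theorem stmt1 (k R : Type) [Field k] [Ring R] [Algebra k R] (Λ : Type)
    (𝒜 : ℤ → Submodule k R) [GradedAlgebra 𝒜]
    (P : DGPoissonAlgebra k R 𝒜)
    (x : Λ → R) (w : Λ → ℤ) (hx : ∀ α, x α ∈ 𝒜 (w α))
    (hgen : Algebra.adjoin k (Set.range x) = ⊤)
    (ψ : Λ → R →ₗ[k] R)
    (hψx : ∀ α, ψ α (x α) = 1) (hψx' : ∀ α β, α ≠ β → ψ α (x β) = 0)
    (hψmem : ∀ (α : Λ) ⦃i : ℤ⦄ ⦃a : R⦄, a ∈ 𝒜 i → ψ α a ∈ 𝒜 (i - w α))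
    (hψmul : ∀ (α : Λ) ⦃i j : ℤ⦄ ⦃a b : R⦄, a ∈ 𝒜 i → b ∈ 𝒜 j →
      ψ α (a * b) = a * ψ α b + sgn (i * j) • (b * ψ α a))
    (hψfin : ∀ a : R, (Function.support fun α => ψ α a).Finite) :
    ∀ (α : Λ) ⦃i : ℤ⦄ ⦃a : R⦄, a ∈ 𝒜 i →
      ψ α (P.d a) - P.d (ψ α a)
        - ∑ᶠ β : Λ, sgn (i - w β) • (ψ β a * ψ α (P.d (x β))) = 0 := by
  intro α i a ha
  have hspan : Submodule.span k (Submonoid.closure (Set.range x) : Set R) = ⊤ := by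
    rw [← Algebra.adjoin_eq_span, hgen, Algebra.top_toSubmodule]
  exact DirectSum.Decomposition.apply_eq_zero_of_mem 𝒜
    (antiDifferentialDefect P x w ψ hψfin α) hspan
    (fun m hm => exists_mem_antiDifferentialDefect_eq_zero P x w ψ hψfin α hx hψx hψx'
      (hψmem α) hψmul hm) ha
end
end

section
/- Let ∂ : F(R) -> F(R) be the unique degree-1 k-linear map satisfying ∂(x_α) = d(x_α), ∂(y_α) = ψ(d(x_α)) = Σ_β ψ_β(d(x_α)) y_β for all α in Λ, and the graded Leibniz rule ∂(uv) = ∂(u)v + (-1)^{|u|} u ∂(v) for homogeneous u, v in F(R). Then ∂^2 = 0, i.e. (F(R), ∂) is a DG algebra. -/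
noncomputable section

open scoped DirectSum

/-! The square of an odd derivation is an even derivation, so `∂²` vanishes once it vanishes
on the generators `x_α, y_α`. On `x_α` this is `d² = 0`, since `∂` restricts to `d` on `R`.
On `y_α` it reduces to `∂ ∘ ψ = ψ ∘ d`: both sides are derivations along `R → F` of degree `1`
(with the Koszul signs), and they agree on `x_α` by the very definition of `∂(y_α)`. -/

lemma sgn_zero : sgn 0 = 1 := by simp [sgn]

lemma sgn_add (m n : ℤ) : sgn (m + n) = sgn m * sgn n := by
  simp [sgn, Int.negOnePow_add]

lemma sgn_add_one (m : ℤ) : sgn (m + 1) = -sgn m := by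
  simp [sgn, Int.negOnePow_succ]

lemma sgn_mul_self (m : ℤ) : sgn m * sgn m = 1 := by
  rw [sgn, ← Units.val_mul, Int.units_mul_self, Units.val_one]

section GradedInduction

variable {k A : Type*} [CommSemiring k] [Semiring A] [Algebra k A]
  {𝒜 : ℤ → Submodule k A} [SetLike.GradedMonoid 𝒜] {S : Set A}

theorem Submodule.eq_top_of_adjoin_homogeneous (hS : ∀ s ∈ S, SetLike.IsHomogeneousElem 𝒜 s)
    (hgen : Algebra.adjoin k S = ⊤) (N : Submodule k A) (hSN : S ⊆ N) (h1 : 1 ∈ N)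
    (hmul : ∀ ⦃i j : ℤ⦄ ⦃a b : A⦄, a ∈ 𝒜 i → b ∈ 𝒜 j → a ∈ N → b ∈ N → a * b ∈ N) :
    N = ⊤ := by
  have hclosure : ∀ m ∈ Submonoid.closure S, SetLike.IsHomogeneousElem 𝒜 m ∧ m ∈ N := by
    intro m hm
    induction hm using Submonoid.closure_induction with
    | mem s hs => exact ⟨hS s hs, hSN hs⟩
    | one => exact ⟨⟨0, SetLike.one_mem_graded 𝒜⟩, h1⟩
    | mul a b _ _ ha hb =>
      obtain ⟨⟨i, hai⟩, haN⟩ := ha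
      obtain ⟨⟨j, hbj⟩, hbN⟩ := hb
      exact ⟨⟨i + j, SetLike.mul_mem_graded hai hbj⟩, hmul hai hbj haN hbN⟩
  rw [eq_top_iff, ← Algebra.top_toSubmodule, ← hgen, Algebra.adjoin_eq_span, Submodule.span_le]
  exact fun m hm => (hclosure m hm).2

theorem LinearMap.eq_of_adjoin_homogeneous {M : Type*} [AddCommMonoid M] [Module k M]
    (hS : ∀ s ∈ S, SetLike.IsHomogeneousElem 𝒜 s) (hgen : Algebra.adjoin k S = ⊤)
    {f g : A →ₗ[k] M} (h1 : f 1 = g 1) (hSfg : ∀ s ∈ S, f s = g s)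
    (hmul : ∀ ⦃i j : ℤ⦄ ⦃a b : A⦄, a ∈ 𝒜 i → b ∈ 𝒜 j → f a = g a → f b = g b →
      f (a * b) = g (a * b)) :
    f = g :=
  LinearMap.eqLocus_eq_top.mp <|
    Submodule.eq_top_of_adjoin_homogeneous hS hgen _ hSfg h1 hmul

end GradedInduction

section Derivations

variable {k R F : Type*} [CommSemiring k] [Ring R] [Algebra k R] [Ring F] [Algebra k F]
  {𝒜 : ℤ → Submodule k R} {ℱ : ℤ → Submodule k F}

variable (𝒜) in
def IsOddDerivation (d : R →ₗ[k] R) : Prop :=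
  ∀ ⦃i j : ℤ⦄ ⦃a b : R⦄, a ∈ 𝒜 i → b ∈ 𝒜 j → d (a * b) = d a * b + sgn i • (a * d b)

variable (𝒜) in
def IsDerivationAlong (ι : R →ₐ[k] F) (Ψ : R →ₗ[k] F) : Prop :=
  ∀ ⦃i j : ℤ⦄ ⦃a b : R⦄, a ∈ 𝒜 i → b ∈ 𝒜 j →
    Ψ (a * b) = ι a * Ψ b + sgn (i * j) • (ι b * Ψ a)

variable {S : Set R}

lemma IsOddDerivation.map_one [SetLike.GradedMonoid 𝒜] {d : R →ₗ[k] R}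
    (hd : IsOddDerivation 𝒜 d) : d 1 = 0 := by
  have h := hd (SetLike.one_mem_graded 𝒜) (SetLike.one_mem_graded 𝒜)
  simp only [mul_one, one_mul, sgn_zero, one_smul] at h
  exact left_eq_add.mp h

lemma IsDerivationAlong.map_one [SetLike.GradedMonoid 𝒜] {ι : R →ₐ[k] F} {Ψ : R →ₗ[k] F}
    (hΨ : IsDerivationAlong 𝒜 ι Ψ) : Ψ 1 = 0 := by
  have h := hΨ (SetLike.one_mem_graded 𝒜) (SetLike.one_mem_graded 𝒜)
  simp only [mul_one, mul_zero, _root_.map_one, one_mul, sgn_zero, one_smul] at h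
  exact left_eq_add.mp h

lemma IsOddDerivation.apply_apply_mul {d : R →ₗ[k] R} (hd : IsOddDerivation 𝒜 d)
    (hmem : ∀ ⦃i : ℤ⦄ ⦃a : R⦄, a ∈ 𝒜 i → d a ∈ 𝒜 (i + 1))
    {i j : ℤ} {a b : R} (ha : a ∈ 𝒜 i) (hb : b ∈ 𝒜 j) :
    d (d (a * b)) = d (d a) * b + a * d (d b) := by
  rw [hd ha hb, map_add, map_zsmul, hd (hmem ha) hb, hd ha (hmem hb), sgn_add_one, smul_add,
    smul_smul, sgn_mul_self, one_smul, neg_smul]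
  abel

lemma IsOddDerivation.apply_apply_eq_zero [SetLike.GradedMonoid 𝒜] {d : R →ₗ[k] R}
    (hd : IsOddDerivation 𝒜 d)
    (hmem : ∀ ⦃i : ℤ⦄ ⦃a : R⦄, a ∈ 𝒜 i → d a ∈ 𝒜 (i + 1))
    (hS : ∀ s ∈ S, SetLike.IsHomogeneousElem 𝒜 s) (hgen : Algebra.adjoin k S = ⊤)
    (hSd : ∀ s ∈ S, d (d s) = 0) (a : R) : d (d a) = 0 := by
  have hdd : d ∘ₗ d = 0 := by
    refine LinearMap.eq_of_adjoin_homogeneous hS hgen ?_ hSd fun i j a b ha hb hda hdb => ?_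
    · simp [hd.map_one]
    · simp_all [hd.apply_apply_mul hmem ha hb]
  exact LinearMap.congr_fun hdd a

lemma IsOddDerivation.apply_algHom_eq [SetLike.GradedMonoid 𝒜] [SetLike.GradedMonoid ℱ]
    {ι : R →ₐ[k] F} (hι : ∀ ⦃i : ℤ⦄ ⦃a : R⦄, a ∈ 𝒜 i → ι a ∈ ℱ i)
    {d : R →ₗ[k] R} {D : F →ₗ[k] F}
    (hd : IsOddDerivation 𝒜 d) (hD : IsOddDerivation ℱ D)
    (hS : ∀ s ∈ S, SetLike.IsHomogeneousElem 𝒜 s) (hgen : Algebra.adjoin k S = ⊤)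
    (hSD : ∀ s ∈ S, D (ι s) = ι (d s)) (a : R) : D (ι a) = ι (d a) := by
  have h : D ∘ₗ ι.toLinearMap = ι.toLinearMap ∘ₗ d := by
    refine LinearMap.eq_of_adjoin_homogeneous hS hgen ?_ hSD fun i j a b ha hb hda hdb => ?_
    · simp [hD.map_one, hd.map_one]
    · simp_all [hD (hι ha) (hι hb), hd ha hb]
  exact LinearMap.congr_fun h a

lemma IsOddDerivation.apply_derivationAlong_eq [SetLike.GradedMonoid 𝒜] {ι : R →ₐ[k] F}
    (hι : ∀ ⦃i : ℤ⦄ ⦃a : R⦄, a ∈ 𝒜 i → ι a ∈ ℱ i) {d : R →ₗ[k] R} {D : F →ₗ[k] F}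
    (hd : IsOddDerivation 𝒜 d) (hdmem : ∀ ⦃i : ℤ⦄ ⦃a : R⦄, a ∈ 𝒜 i → d a ∈ 𝒜 (i + 1))
    (hD : IsOddDerivation ℱ D) (hιd : ∀ a, D (ι a) = ι (d a))
    {Ψ : R →ₗ[k] F} (hΨ : IsDerivationAlong 𝒜 ι Ψ)
    (hΨmem : ∀ ⦃i : ℤ⦄ ⦃a : R⦄, a ∈ 𝒜 i → Ψ a ∈ ℱ i)
    (hS : ∀ s ∈ S, SetLike.IsHomogeneousElem 𝒜 s) (hgen : Algebra.adjoin k S = ⊤)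
    (hSΨ : ∀ s ∈ S, D (Ψ s) = Ψ (d s)) (a : R) : D (Ψ a) = Ψ (d a) := by
  have h : D ∘ₗ Ψ = Ψ ∘ₗ d := by
    refine LinearMap.eq_of_adjoin_homogeneous hS hgen ?_ hSΨ fun i j a b ha hb hda hdb => ?_
    · simp [hΨ.map_one, hd.map_one]
    simp only [LinearMap.comp_apply] at hda hdb ⊢
    have e₁ : sgn (i * j) * sgn j = sgn ((i + 1) * j) := by rw [← sgn_add]; ring_nf
    have e₂ : sgn i * sgn (i * (j + 1)) = sgn (i * j) := by
      rw [mul_add_one, sgn_add, ← mul_assoc, mul_comm (sgn i), mul_assoc, sgn_mul_self, mul_one]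
    calc D (Ψ (a * b))
        = (ι (d a) * Ψ b + sgn i • (ι a * Ψ (d b)))
          + sgn (i * j) • (ι (d b) * Ψ a + sgn j • (ι b * Ψ (d a))) := by
          rw [hΨ ha hb, map_add, map_zsmul, hD (hι ha) (hΨmem hb), hD (hι hb) (hΨmem ha),
            hιd, hιd, hda, hdb]
      _ = (ι (d a) * Ψ b + sgn ((i + 1) * j) • (ι b * Ψ (d a)))
          + sgn i • (ι a * Ψ (d b) + sgn (i * (j + 1)) • (ι (d b) * Ψ a)) := by
          rw [smul_add, smul_add, smul_smul, smul_smul, e₁, e₂]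
          abel
      _ = Ψ (d (a * b)) := by
          rw [hd ha hb, map_add, map_zsmul, hΨ (hdmem ha) hb, hΨ ha (hdmem hb)]
  exact LinearMap.congr_fun h a

end Derivations

section FinsumLinearMap

variable {k M N ι : Type*} [CommSemiring k] [AddCommMonoid M] [Module k M]
  [AddCommMonoid N] [Module k N]

def finsumLinearMap (f : ι → M →ₗ[k] N) (hf : ∀ m, (Function.support fun i => f i m).Finite) :
    M →ₗ[k] N where
  toFun m := ∑ᶠ i, f i m
  map_add' m m' := by simp only [map_add]; exact finsum_add_distrib (hf m) (hf m')
  map_smul' c m := by simp only [map_smul]; exact (smul_finsum' c (hf m)).symm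

end FinsumLinearMap

section Psi

variable {k R F Λ : Type*} [CommSemiring k] [Ring R] [Algebra k R] [Ring F] [Algebra k F]
  (ι : R →ₐ[k] F) (ψ : Λ → R →ₗ[k] R) (y : Λ → F)
  (hψfin : ∀ a : R, (Function.support fun α => ψ α a).Finite)

def psiMap : R →ₗ[k] F :=
  finsumLinearMap (fun β => LinearMap.mulRight k (y β) ∘ₗ ι.toLinearMap ∘ₗ ψ β) fun a =>
    (hψfin a).subset fun β hβ hψ => hβ (by simp [hψ])

lemma psiMap_apply (a : R) : psiMap ι ψ y hψfin a = ∑ᶠ β, ι (ψ β a) * y β := rfl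

variable {ι ψ y hψfin}

lemma psiMap_eq_sum {a : R} {s : Finset Λ} (hs : ∀ β ∉ s, ψ β a = 0) :
    psiMap ι ψ y hψfin a = ∑ β ∈ s, ι (ψ β a) * y β := by
  rw [psiMap_apply, finsum_eq_sum_of_support_subset]
  intro β hβ
  by_contra hβs
  exact hβ (by simp [hs β hβs])

lemma psiMap_apply_of_dual {x : R} {α : Λ} (hα : ψ α x = 1) (hβ : ∀ β, β ≠ α → ψ β x = 0) :
    psiMap ι ψ y hψfin x = y α := by
  rw [psiMap_eq_sum (s := {α}) fun β h => hβ β (Finset.notMem_singleton.mp h)]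
  simp [hα]

variable {𝒜 : ℤ → Submodule k R} {ℱ : ℤ → Submodule k F} [SetLike.GradedMonoid ℱ] {w : Λ → ℤ}

lemma psiMap_mem (hι : ∀ ⦃i : ℤ⦄ ⦃a : R⦄, a ∈ 𝒜 i → ι a ∈ ℱ i) (hy : ∀ α, y α ∈ ℱ (w α))
    (hψmem : ∀ (α : Λ) ⦃i : ℤ⦄ ⦃a : R⦄, a ∈ 𝒜 i → ψ α a ∈ 𝒜 (i - w α))
    ⦃i : ℤ⦄ ⦃a : R⦄ (ha : a ∈ 𝒜 i) : psiMap ι ψ y hψfin a ∈ ℱ i := by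
  rw [psiMap_eq_sum (s := (hψfin a).toFinset) fun β h => by simpa using h]
  refine Submodule.sum_mem _ fun β _ => ?_
  simpa using SetLike.mul_mem_graded (hι (hψmem β ha)) (hy β)

lemma psiMap_isDerivationAlong
    (hψmul : ∀ (α : Λ) ⦃i j : ℤ⦄ ⦃a b : R⦄, a ∈ 𝒜 i → b ∈ 𝒜 j →
      ψ α (a * b) = a * ψ α b + sgn (i * j) • (b * ψ α a)) :
    IsDerivationAlong 𝒜 ι (psiMap ι ψ y hψfin) := by
  classical
  intro i j a b ha hb
  set s := (hψfin a).toFinset ∪ (hψfin b).toFinset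
  have hsa : ∀ β ∉ s, ψ β a = 0 := fun β h => by simp_all [s]
  have hsb : ∀ β ∉ s, ψ β b = 0 := fun β h => by simp_all [s]
  rw [psiMap_eq_sum hsa, psiMap_eq_sum hsb,
    psiMap_eq_sum fun β h => by rw [hψmul β ha hb, hsa β h, hsb β h]; simp,
    Finset.mul_sum, Finset.mul_sum, Finset.smul_sum, ← Finset.sum_add_distrib]
  refine Finset.sum_congr rfl fun β _ => ?_
  rw [hψmul β ha hb, map_add, map_mul, map_zsmul, map_mul, add_mul, smul_mul_assoc, mul_assoc,
    mul_assoc]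

end Psi

theorem stmt3_general (k R F : Type) [Field k] [Ring R] [Algebra k R] [Ring F] [Algebra k F]
    (Λ : Type) (𝒜 : ℤ → Submodule k R) [GradedAlgebra 𝒜]
    (ℱ : ℤ → Submodule k F) [GradedAlgebra ℱ]
    (P : DGPoissonAlgebra k R 𝒜)
    (x : Λ → R) (w : Λ → ℤ) (hx : ∀ α, x α ∈ 𝒜 (w α))
    (hgen : Algebra.adjoin k (Set.range x) = ⊤)
    (ψ : Λ → R →ₗ[k] R)
    (hψx : ∀ α, ψ α (x α) = 1) (hψx' : ∀ α β, α ≠ β → ψ α (x β) = 0)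
    (hψmem : ∀ (α : Λ) ⦃i : ℤ⦄ ⦃a : R⦄, a ∈ 𝒜 i → ψ α a ∈ 𝒜 (i - w α))
    (hψmul : ∀ (α : Λ) ⦃i j : ℤ⦄ ⦃a b : R⦄, a ∈ 𝒜 i → b ∈ 𝒜 j →
      ψ α (a * b) = a * ψ α b + sgn (i * j) • (b * ψ α a))
    (hψfin : ∀ a : R, (Function.support fun α => ψ α a).Finite)
    -- `F = R⟨y_α | α ∈ Λ⟩`, with `ι : R → F` the canonical inclusion
    (ι : R →ₐ[k] F) (hι : ∀ ⦃i : ℤ⦄ ⦃a : R⦄, a ∈ 𝒜 i → ι a ∈ ℱ i)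
    (y : Λ → F) (hy : ∀ α, y α ∈ ℱ (w α))
    (hFgen : Algebra.adjoin k ((Set.range fun α => ι (x α)) ∪ Set.range y) = ⊤)
    -- the map `∂`
    (D : F →ₗ[k] F)
    (hDmem : ∀ ⦃i : ℤ⦄ ⦃u : F⦄, u ∈ ℱ i → D u ∈ ℱ (i + 1))
    (hDx : ∀ α, D (ι (x α)) = ι (P.d (x α)))
    (hDy : ∀ α, D (y α) = ∑ᶠ β : Λ, ι (ψ β (P.d (x α))) * y β)
    (hDmul : ∀ ⦃i j : ℤ⦄ ⦃u v : F⦄, u ∈ ℱ i → v ∈ ℱ j →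
      D (u * v) = D u * v + sgn i • (u * D v)) :
    ∀ u : F, D (D u) = 0 := by
  have hxhom : ∀ s ∈ Set.range x, SetLike.IsHomogeneousElem 𝒜 s := by
    rintro _ ⟨α, rfl⟩
    exact ⟨w α, hx α⟩
  have hιd : ∀ a, D (ι a) = ι (P.d a) :=
    IsOddDerivation.apply_algHom_eq hι P.d_mul hDmul hxhom hgen
      (by rintro _ ⟨α, rfl⟩; exact hDx α)
  set Ψ := psiMap ι ψ y hψfin
  have hΨx : ∀ α, Ψ (x α) = y α := fun α =>
    psiMap_apply_of_dual (hψx α) fun β hβ => hψx' β α hβ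
  have hDΨ : ∀ a, D (Ψ a) = Ψ (P.d a) :=
    IsOddDerivation.apply_derivationAlong_eq hι P.d_mul P.d_mem hDmul hιd
      (psiMap_isDerivationAlong hψmul) (psiMap_mem hι hy hψmem) hxhom hgen
      (by rintro _ ⟨α, rfl⟩; rw [hΨx, hDy, psiMap_apply])
  have hFhom : ∀ s ∈ (Set.range fun α => ι (x α)) ∪ Set.range y,
      SetLike.IsHomogeneousElem ℱ s := by
    rintro _ (⟨α, rfl⟩ | ⟨α, rfl⟩)
    · exact ⟨w α, hι (hx α)⟩
    · exact ⟨w α, hy α⟩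
  refine IsOddDerivation.apply_apply_eq_zero hDmul hDmem hFhom hFgen ?_
  rintro _ (⟨α, rfl⟩ | ⟨α, rfl⟩)
  · rw [hDx, hιd, P.d_sq, map_zero]
  · rw [← hΨx, hDΨ, hDΨ, P.d_sq, map_zero]

/-- Let `F = R⟨y_α⟩` and let `∂ : F → F` be the degree-1 `k`-linear
map with `∂(x_α) = d(x_α)`, `∂(y_α) = ψ(d(x_α)) = ∑_β ψ_β(d(x_α)) y_β` and satisfying
the graded Leibniz rule.  Then `∂² = 0`, i.e. `(F, ∂)` is a DG algebra. -/
theorem stmt3 (k R F : Type) [Field k] [Ring R] [Algebra k R] [Ring F] [Algebra k F]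
    (Λ : Type) (𝒜 : ℤ → Submodule k R) [GradedAlgebra 𝒜]
    (ℱ : ℤ → Submodule k F) [GradedAlgebra ℱ]
    (P : DGPoissonAlgebra k R 𝒜)
    (x : Λ → R) (w : Λ → ℤ) (hx : ∀ α, x α ∈ 𝒜 (w α))
    (hgen : Algebra.adjoin k (Set.range x) = ⊤)
    (ψ : Λ → R →ₗ[k] R)
    (hψx : ∀ α, ψ α (x α) = 1) (hψx' : ∀ α β, α ≠ β → ψ α (x β) = 0)
    (hψmem : ∀ (α : Λ) ⦃i : ℤ⦄ ⦃a : R⦄, a ∈ 𝒜 i → ψ α a ∈ 𝒜 (i - w α))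
    (hψmul : ∀ (α : Λ) ⦃i j : ℤ⦄ ⦃a b : R⦄, a ∈ 𝒜 i → b ∈ 𝒜 j →
      ψ α (a * b) = a * ψ α b + sgn (i * j) • (b * ψ α a))
    (hψfin : ∀ a : R, (Function.support fun α => ψ α a).Finite)
    -- `F = R⟨y_α | α ∈ Λ⟩`, with `ι : R → F` the canonical inclusion
    (ι : R →ₐ[k] F) (hι : ∀ ⦃i : ℤ⦄ ⦃a : R⦄, a ∈ 𝒜 i → ι a ∈ ℱ i)
    (hιinj : Function.Injective ι)
    (y : Λ → F) (hy : ∀ α, y α ∈ ℱ (w α))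
    (hFgen : Algebra.adjoin k ((Set.range fun α => ι (x α)) ∪ Set.range y) = ⊤)
    -- the map `∂`
    (D : F →ₗ[k] F)
    (hDmem : ∀ ⦃i : ℤ⦄ ⦃u : F⦄, u ∈ ℱ i → D u ∈ ℱ (i + 1))
    (hDx : ∀ α, D (ι (x α)) = ι (P.d (x α)))
    (hDy : ∀ α, D (y α) = ∑ᶠ β : Λ, ι (ψ β (P.d (x α))) * y β)
    (hDmul : ∀ ⦃i j : ℤ⦄ ⦃u v : F⦄, u ∈ ℱ i → v ∈ ℱ j →
      D (u * v) = D u * v + sgn i • (u * D v)) :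
    ∀ u : F, D (D u) = 0 :=
  stmt3_general k R F Λ 𝒜 ℱ P x w hx hgen ψ hψx hψx' hψmem hψmul hψfin ι hι y hy hFgen D hDmem hDx
    hDy hDmul
end
end

section
/- Let I be a DG Poisson ideal of R and let Q = R^e m_R(I) + R^e h_R(I) R^e be the ideal of R^e generated by m_R(I) and h_R(I) (a DG ideal of R^e). Then the quotient DG algebra R^e/Q, together with the maps m' : R/I -> R^e/Q, m'(r + I) = m_R(r) + Q, and h' : R/I -> R^e/Q, h'(r + I) = h_R(r) + Q, is a universal enveloping algebra of the DG Poisson algebra A = R/I. -/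
noncomputable section

open scoped DirectSum

/-!
Every structure in play is transported along surjections. The compatibility identities for
`(m', h')` are the images under `E → R^e/Q` of those for `(m_R, h_R)`, read through `R → R/I`.
Conversely, a compatible pair `(f, g)` out of `R/I`, precomposed with `R → R/I`, is compatible
out of `R`; the universal property of `R^e` gives `φ : R^e → D`, which kills `m_R(I)` and
`h_R(I)` because `f` and `g` kill the image of `I`, so it descends to `R^e/Q`. Grading and
differential descend as well, since homogeneous elements of a quotient lift to homogeneous
elements.
-/

open Function

theorem GradedRingHom.exists_mem_eq_of_surjective {ι σ τ A B : Type*}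
    [DecidableEq ι] [AddMonoid ι]
    [Semiring A] [Semiring B] [SetLike σ A] [SetLike τ B]
    [AddSubmonoidClass σ A] [AddSubmonoidClass τ B]
    {𝒜 : ι → σ} {ℬ : ι → τ} [GradedRing 𝒜] [GradedRing ℬ]
    (f : 𝒜 →+*ᵍ ℬ) (hf : Surjective f) {i : ι} {b : B} (hb : b ∈ ℬ i) :
    ∃ a ∈ 𝒜 i, f a = b := by
  obtain ⟨x, rfl⟩ := hf b
  refine ⟨DirectSum.decompose 𝒜 x i, SetLike.coe_mem _, ?_⟩
  rw [f.map_directSumDecompose, DirectSum.decompose_of_mem_same ℬ hb]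

section Quotient

variable {k : Type} [Field k] {A B D : Type} [Ring A] [Algebra k A] [Ring B] [Algebra k B]
  [Ring D] [Algebra k D]

theorem idealGen_le_ker (S : Set A) (φ : A →ₐ[k] D) (hS : ∀ s ∈ S, φ s = 0) :
    idealGen k S ≤ LinearMap.ker φ.toLinearMap := by
  rw [idealGen, Submodule.span_le]
  rintro _ ⟨u, v, s, hs, rfl⟩
  simp [hS s hs]

namespace IsQuotientBy

variable {π : A →ₐ[k] B} {M : Submodule k A}

theorem ker_le_ker (hπ : IsQuotientBy k π M) {φ : A →ₐ[k] D}
    (hφ : M ≤ LinearMap.ker φ.toLinearMap) : RingHom.ker π.toRingHom ≤ RingHom.ker φ.toRingHom :=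
  fun a ha => hφ ((hπ.ker a).1 ha)

def lift (hπ : IsQuotientBy k π M) (φ : A →ₐ[k] D) (hφ : M ≤ LinearMap.ker φ.toLinearMap) :
    B →ₐ[k] D :=
  { RingHom.liftOfSurjective π.toRingHom hπ.surj ⟨φ.toRingHom, hπ.ker_le_ker hφ⟩ with
    commutes' := fun c => by
      simpa using RingHom.liftOfRightInverse_comp_apply π.toRingHom _
        (rightInverse_surjInv hπ.surj) ⟨φ.toRingHom, hπ.ker_le_ker hφ⟩ (algebraMap k A c) }

theorem lift_comp (hπ : IsQuotientBy k π M) (φ : A →ₐ[k] D)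
    (hφ : M ≤ LinearMap.ker φ.toLinearMap) : (hπ.lift φ hφ).comp π = φ :=
  AlgHom.ext (RingHom.liftOfRightInverse_comp_apply π.toRingHom _
    (rightInverse_surjInv hπ.surj) ⟨φ.toRingHom, hπ.ker_le_ker hφ⟩)

end IsQuotientBy

end Quotient

namespace IsDGAlgebraMap

variable {k : Type} [Field k] {A B C : Type} [Ring A] [Algebra k A] [Ring B] [Algebra k B]
  [Ring C] [Algebra k C] {𝒜 : ℤ → Submodule k A} {ℬ : ℤ → Submodule k B}
  {𝒞 : ℤ → Submodule k C} {dA : A →ₗ[k] A} {dB : B →ₗ[k] B} {dC : C →ₗ[k] C}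

theorem comp {ψ : B →ₐ[k] C} {π : A →ₐ[k] B} (hψ : IsDGAlgebraMap k ℬ 𝒞 dB dC ψ)
    (hπ : IsDGAlgebraMap k 𝒜 ℬ dA dB π) : IsDGAlgebraMap k 𝒜 𝒞 dA dC (ψ.comp π) :=
  ⟨fun _ _ ha => hψ.map_mem (hπ.map_mem ha), fun a => by simp [hπ.map_d, hψ.map_d]⟩

theorem of_comp_surjective [GradedAlgebra 𝒜] [GradedAlgebra ℬ] {ψ : B →ₐ[k] C}
    {π : A →ₐ[k] B} (hπ : IsDGAlgebraMap k 𝒜 ℬ dA dB π) (hπ_surj : Surjective π)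
    (hψπ : IsDGAlgebraMap k 𝒜 𝒞 dA dC (ψ.comp π)) : IsDGAlgebraMap k ℬ 𝒞 dB dC ψ where
  map_mem i b hb := by
    obtain ⟨a, ha, rfl⟩ :=
      GradedRingHom.exists_mem_eq_of_surjective (𝒜 := 𝒜) (ℬ := ℬ)
        ⟨π.toRingHom, fun ha => hπ.map_mem ha⟩ hπ_surj hb
    exact hψπ.map_mem ha
  map_d b := by
    obtain ⟨a, rfl⟩ := hπ_surj b
    simpa [hπ.map_d] using hψπ.map_d a

end IsDGAlgebraMap

structure IsDGPoissonMap {k : Type} [Field k] {R A : Type} [Ring R] [Algebra k R] [Ring A]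
    [Algebra k A] {𝒜 : ℤ → Submodule k R} {ℬ : ℤ → Submodule k A}
    (P : DGPoissonAlgebra k R 𝒜) (PA : DGPoissonAlgebra k A ℬ) (π : R →ₐ[k] A) : Prop where
  map_mem : ∀ ⦃i : ℤ⦄ ⦃a : R⦄, a ∈ 𝒜 i → π a ∈ ℬ i
  map_d : ∀ a : R, π (P.d a) = PA.d (π a)
  map_br : ∀ a b : R, π (P.br a b) = PA.br (π a) (π b)

namespace UEACompat

variable {k : Type} [Field k] {R A E : Type} [Ring R] [Algebra k R] [Ring A] [Algebra k A]
  [Ring E] [Algebra k E] {𝒜 : ℤ → Submodule k R} {ℬ : ℤ → Submodule k A}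
  {ℰ : ℤ → Submodule k E} {P : DGPoissonAlgebra k R 𝒜} {PA : DGPoissonAlgebra k A ℬ}
  {π : R →ₐ[k] A} {dE : E →ₗ[k] E} {f : A →ₐ[k] E} {g : A →ₗ[k] E}

theorem comp_left {C : Type} [Ring C] [Algebra k C] {𝒞 : ℤ → Submodule k C}
    {dC : C →ₗ[k] C} {ψ : E →ₐ[k] C} (h : UEACompat k ℬ ℰ PA dE f g)
    (hψ : IsDGAlgebraMap k ℰ 𝒞 dE dC ψ) :
    UEACompat k ℬ 𝒞 PA dC (ψ.comp f) (ψ.toLinearMap ∘ₗ g) := by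
  obtain ⟨hf, hg_mem, hg_d, hg_br, hf_br, hg_mul⟩ := h
  refine ⟨hψ.comp hf, fun _ _ ha => hψ.map_mem (hg_mem ha), fun a => ?_,
    fun _ _ _ _ ha hb => ?_, fun _ _ _ _ ha hb => ?_, fun _ _ _ _ ha hb => ?_⟩
  · simp [hg_d, hψ.map_d]
  · simp [hg_br ha hb]
  · simp [hf_br ha hb]
  · simp [hg_mul ha hb]

theorem comp_right (hπ : IsDGPoissonMap P PA π) (h : UEACompat k ℬ ℰ PA dE f g) :
    UEACompat k 𝒜 ℰ P dE (f.comp π) (g ∘ₗ π.toLinearMap) := by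
  obtain ⟨hf, hg_mem, hg_d, hg_br, hf_br, hg_mul⟩ := h
  refine ⟨hf.comp ⟨hπ.map_mem, hπ.map_d⟩, fun _ _ ha => hg_mem (hπ.map_mem ha), fun a => ?_,
    fun _ _ _ _ ha hb => ?_, fun _ _ _ _ ha hb => ?_, fun _ _ _ _ ha hb => ?_⟩
  · simp [hπ.map_d, hg_d]
  · simpa [hπ.map_br] using hg_br (hπ.map_mem ha) (hπ.map_mem hb)
  · simpa [hπ.map_br] using hf_br (hπ.map_mem ha) (hπ.map_mem hb)
  · simpa using hg_mul (hπ.map_mem ha) (hπ.map_mem hb)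

theorem of_comp_right [GradedAlgebra 𝒜] [GradedAlgebra ℬ] (hπ : IsDGPoissonMap P PA π)
    (hπ_surj : Surjective π) (h : UEACompat k 𝒜 ℰ P dE (f.comp π) (g ∘ₗ π.toLinearMap)) :
    UEACompat k ℬ ℰ PA dE f g := by
  obtain ⟨hf, hg_mem, hg_d, hg_br, hf_br, hg_mul⟩ := h
  have lift {i : ℤ} {a : A} (ha : a ∈ ℬ i) : ∃ r ∈ 𝒜 i, π r = a :=
    GradedRingHom.exists_mem_eq_of_surjective (𝒜 := 𝒜) (ℬ := ℬ)
      ⟨π.toRingHom, fun ha => hπ.map_mem ha⟩ hπ_surj ha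
  refine ⟨(IsDGAlgebraMap.of_comp_surjective ⟨hπ.map_mem, hπ.map_d⟩ hπ_surj hf),
    fun _ _ ha => ?_, fun a => ?_, fun _ _ _ _ ha hb => ?_, fun _ _ _ _ ha hb => ?_,
    fun _ _ _ _ ha hb => ?_⟩
  · obtain ⟨r, hr, rfl⟩ := lift ha
    exact hg_mem hr
  · obtain ⟨r, rfl⟩ := hπ_surj a
    simpa [hπ.map_d] using hg_d r
  · obtain ⟨r, hr, rfl⟩ := lift ha
    obtain ⟨s, hs, rfl⟩ := lift hb
    simpa [hπ.map_br] using hg_br hr hs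
  · obtain ⟨r, hr, rfl⟩ := lift ha
    obtain ⟨s, hs, rfl⟩ := lift hb
    simpa [hπ.map_br] using hf_br hr hs
  · obtain ⟨r, hr, rfl⟩ := lift ha
    obtain ⟨s, hs, rfl⟩ := lift hb
    simpa using hg_mul hr hs

end UEACompat

theorem stmt13_general (k R E C A : Type) [Field k] [Ring R] [Algebra k R] [Ring E] [Algebra k E]
    [Ring C] [Algebra k C] [Ring A] [Algebra k A]
    (𝒜 : ℤ → Submodule k R) [GradedAlgebra 𝒜]
    (ℰ : ℤ → Submodule k E) [GradedAlgebra ℰ]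
    (𝒞 : ℤ → Submodule k C) [GradedAlgebra 𝒞]
    (ℬ : ℤ → Submodule k A) [GradedAlgebra ℬ]
    (P : DGPoissonAlgebra k R 𝒜)
    -- `(R^e, m_R, h_R)`: the universal enveloping algebra of `R`
    (DE : DGAlgebra k E ℰ) (mR : R →ₐ[k] E) (hR : R →ₗ[k] E)
    (hUEA : IsUEA k 𝒜 ℰ P DE mR hR)
    -- the DG Poisson ideal `I` and the quotient `A = R/I`
    (I : Submodule k R)
    (π' : R →ₐ[k] A) (hπ' : IsQuotientBy k π' I)
    (hπ'mem : ∀ ⦃i : ℤ⦄ ⦃a : R⦄, a ∈ 𝒜 i → π' a ∈ ℬ i)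
    (PA : DGPoissonAlgebra k A ℬ)
    (hPAd : ∀ r : R, PA.d (π' r) = π' (P.d r))
    (hPAbr : ∀ r s : R, PA.br (π' r) (π' s) = π' (P.br r s))
    -- the quotient `R^e/Q` with its induced differential
    (πQ : E →ₐ[k] C)
    (hπQ : IsQuotientBy k πQ (idealGen k (⇑mR '' (I : Set R) ∪ ⇑hR '' (I : Set R))))
    (hπQmem : ∀ ⦃i : ℤ⦄ ⦃u : E⦄, u ∈ ℰ i → πQ u ∈ 𝒞 i)
    (DC : DGAlgebra k C 𝒞) (hDC : ∀ u : E, DC.d (πQ u) = πQ (DE.d u))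
    -- the structure maps `m'` and `h'`
    (m' : A →ₐ[k] C) (hm' : ∀ r : R, m' (π' r) = πQ (mR r))
    (h' : A →ₗ[k] C) (hh' : ∀ r : R, h' (π' r) = πQ (hR r)) :
    IsUEA k ℬ 𝒞 PA DC m' h' := by
  obtain ⟨hcompat, huniv⟩ := hUEA
  have hπ'DG : IsDGPoissonMap P PA π' :=
    ⟨hπ'mem, fun r => (hPAd r).symm, fun r s => (hPAbr r s).symm⟩
  have hπQDG : IsDGAlgebraMap k ℰ 𝒞 DE.d DC.d πQ := ⟨hπQmem, fun u => (hDC u).symm⟩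
  have hm'π : m'.comp π' = πQ.comp mR := AlgHom.ext hm'
  have hh'π : h' ∘ₗ π'.toLinearMap = πQ.toLinearMap ∘ₗ hR := LinearMap.ext hh'
  refine ⟨.of_comp_right hπ'DG hπ'.surj ?_, ?_⟩
  · rw [hm'π, hh'π]
    exact hcompat.comp_left hπQDG
  intro D _ _ 𝒟 _ dD f g hfg
  obtain ⟨φ, ⟨hφ, hφm, hφh⟩, hφ_unique⟩ := huniv D 𝒟 dD _ _ (hfg.comp_right hπ'DG)
  have hφQ : idealGen k (⇑mR '' (I : Set R) ∪ ⇑hR '' (I : Set R)) ≤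
      LinearMap.ker φ.toLinearMap := idealGen_le_ker _ φ <| by
    rintro _ (⟨r, hr, rfl⟩ | ⟨r, hr, rfl⟩)
    · simpa [(hπ'.ker r).2 hr] using AlgHom.congr_fun hφm r
    · simpa [(hπ'.ker r).2 hr] using LinearMap.congr_fun hφh r
  have hΦ := hπQ.lift_comp φ hφQ
  refine ⟨hπQ.lift φ hφQ, ⟨hπQDG.of_comp_surjective hπQ.surj (by rwa [hΦ]), ?_, ?_⟩, ?_⟩
  · rw [← AlgHom.cancel_right hπ'.surj, AlgHom.comp_assoc, hm'π, ← AlgHom.comp_assoc, hΦ, hφm]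
  · rw [← LinearMap.cancel_right (g := π'.toLinearMap) hπ'.surj, LinearMap.comp_assoc, hh'π,
      ← LinearMap.comp_assoc, ← AlgHom.comp_toLinearMap, hΦ, hφh]
  · rintro ψ ⟨hψ, hψm, hψh⟩
    rw [← AlgHom.cancel_right hπQ.surj, hΦ]
    refine hφ_unique _ ⟨hψ.comp hπQDG, ?_, ?_⟩
    · rw [AlgHom.comp_assoc, ← hm'π, ← AlgHom.comp_assoc, hψm]
    · rw [AlgHom.comp_toLinearMap, LinearMap.comp_assoc, ← hh'π, ← LinearMap.comp_assoc, hψh]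

/-- Let `I` be a DG Poisson ideal of `R` and let
`Q = R^e m_R(I) + R^e h_R(I) R^e` be the (DG) ideal of `R^e` generated by `m_R(I)` and
`h_R(I)`.  Then `R^e/Q`, with `m'(r + I) = m_R(r) + Q` and `h'(r + I) = h_R(r) + Q`,
is a universal enveloping algebra of the DG Poisson algebra `A = R/I`. -/
theorem stmt13 (k R E C A : Type) [Field k] [Ring R] [Algebra k R] [Ring E] [Algebra k E]
    [Ring C] [Algebra k C] [Ring A] [Algebra k A]
    (n : ℕ) (𝒜 : ℤ → Submodule k R) [GradedAlgebra 𝒜]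
    (ℰ : ℤ → Submodule k E) [GradedAlgebra ℰ]
    (𝒞 : ℤ → Submodule k C) [GradedAlgebra 𝒞]
    (ℬ : ℤ → Submodule k A) [GradedAlgebra ℬ]
    (P : DGPoissonAlgebra k R 𝒜)
    (x : Fin n → R) (w : Fin n → ℤ) (hx : ∀ i, x i ∈ 𝒜 (w i))
    (hgen : Algebra.adjoin k (Set.range x) = ⊤)
    -- `(R^e, m_R, h_R)`: the universal enveloping algebra of `R`
    (DE : DGAlgebra k E ℰ) (mR : R →ₐ[k] E) (hR : R →ₗ[k] E)
    (hUEA : IsUEA k 𝒜 ℰ P DE mR hR)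
    (hEgen : Algebra.adjoin k (Set.range ⇑mR ∪ Set.range ⇑hR) = ⊤)
    -- the DG Poisson ideal `I` and the quotient `A = R/I`
    (I : Submodule k R) (hI : IsDGPoissonIdeal k 𝒜 P I)
    (π' : R →ₐ[k] A) (hπ' : IsQuotientBy k π' I)
    (hπ'mem : ∀ ⦃i : ℤ⦄ ⦃a : R⦄, a ∈ 𝒜 i → π' a ∈ ℬ i)
    (PA : DGPoissonAlgebra k A ℬ)
    (hPAd : ∀ r : R, PA.d (π' r) = π' (P.d r))
    (hPAbr : ∀ r s : R, PA.br (π' r) (π' s) = π' (P.br r s))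
    -- the quotient `R^e/Q` with its induced differential
    (πQ : E →ₐ[k] C)
    (hπQ : IsQuotientBy k πQ (idealGen k (⇑mR '' (I : Set R) ∪ ⇑hR '' (I : Set R))))
    (hπQmem : ∀ ⦃i : ℤ⦄ ⦃u : E⦄, u ∈ ℰ i → πQ u ∈ 𝒞 i)
    (DC : DGAlgebra k C 𝒞) (hDC : ∀ u : E, DC.d (πQ u) = πQ (DE.d u))
    -- the structure maps `m'` and `h'`
    (m' : A →ₐ[k] C) (hm' : ∀ r : R, m' (π' r) = πQ (mR r))
    (h' : A →ₗ[k] C) (hh' : ∀ r : R, h' (π' r) = πQ (hR r)) :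
    IsUEA k ℬ 𝒞 PA DC m' h' :=
  stmt13_general k R E C A 𝒜 ℰ 𝒞 ℬ P DE mR hR hUEA I π' hπ' hπ'mem PA hPAd hPAbr πQ hπQ hπQmem DC
    hDC m' hm' h' hh'
end
end
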